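/- Let σ ∈ C²([z_min, z_max]) with σ(z_min) = σ(z_max) = 0, and let h ∈ C²([z_min, z_max]) be arbitrary. Then ∫_{z_min}^{z_max} (σ²/2)·h·h'' dz + 2∫ σσ'·h·h' dz ≤ c∫ h² dz - ∫ (σ²/2)(h')² dz, where c = (1/2)·sup |σσ'' + (σ')²|. In particular the left-hand side is bounded above by c∫ h² dz. -/

import Mathlib

/-!
Integrating by parts once turns `∫ (σ²/2) h h''` into `-∫ σσ' h h' - ∫ (σ²/2)(h')²`, so the
left-hand side equals `∫ σσ' (h²/2)' - ∫ (σ²/2)(h')²`; a second integration by parts gives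
`-½ ∫ (σσ'' + (σ')²) h² - ∫ (σ²/2)(h')²`. Both boundary terms carry a factor `σ`, which vanishes
at the endpoints. The first integral is at most `c ∫ h²` and the second is nonnegative.
-/

open intervalIntegral Set
open scoped Interval

theorem integral_mul_deriv_eq_neg_deriv_mul_of_eq_zero {u u' v v' : ℝ → ℝ} {a b : ℝ}
    (hu : ∀ x ∈ [[a, b]], HasDerivAt u (u' x) x) (hv : ∀ x ∈ [[a, b]], HasDerivAt v (v' x) x)
    (hu' : IntervalIntegrable u' MeasureTheory.volume a b)
    (hv' : IntervalIntegrable v' MeasureTheory.volume a b) (ha : u a = 0) (hb : u b = 0) :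
    ∫ x in a..b, u x * v' x = -∫ x in a..b, u' x * v x := by
  rw [integral_mul_deriv_eq_deriv_mul hu hv hu' hv', ha, hb]
  ring

theorem abs_integral_mul_le_sSup_abs_mul_integral {f g : ℝ → ℝ} {a b : ℝ} (hab : a ≤ b)
    (hf : ContinuousOn f (Icc a b)) (hg : ContinuousOn g (Icc a b))
    (hg₀ : ∀ x ∈ Icc a b, 0 ≤ g x) :
    |∫ x in a..b, f x * g x| ≤ sSup ((fun x => |f x|) '' Icc a b) * ∫ x in a..b, g x := by
  have hbdd : BddAbove ((fun x => |f x|) '' Icc a b) :=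
    (isCompact_Icc.image_of_continuousOn hf.abs).bddAbove
  rw [← integral_const_mul]
  refine (abs_integral_le_integral_abs hab).trans <| integral_mono_on hab
    ((hf.mul hg).abs.intervalIntegrable_of_Icc hab)
    ((continuousOn_const.mul hg).intervalIntegrable_of_Icc hab) fun x hx => ?_
  rw [abs_mul, abs_of_nonneg (hg₀ x hx)]
  exact mul_le_mul_of_nonneg_right (le_csSup hbdd ⟨x, hx, rfl⟩) (hg₀ x hx)

section Diffusion

variable {σ h : ℝ → ℝ} {a b : ℝ}

theorem integral_sq_div_two_mul_mul_deriv_deriv_eq (hσ : ContDiff ℝ 1 σ) (hh : ContDiff ℝ 2 h)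
    (ha : σ a = 0) (hb : σ b = 0) :
    ∫ z in a..b, (σ z ^ 2 / 2) * h z * deriv (deriv h) z
      = -(∫ z in a..b, σ z * deriv σ z * h z * deriv h z)
        - ∫ z in a..b, (σ z ^ 2 / 2) * deriv h z ^ 2 := by
  have hσ' := hσ.continuous_deriv_one
  have hh' : ContDiff ℝ 1 (deriv h) := hh.deriv'
  have hh₁ := hh'.continuous
  have hh₂ := hh'.continuous_deriv_one
  have hu : ∀ x, HasDerivAt (fun z => σ z ^ 2 / 2 * h z)
      (σ x * deriv σ x * h x + σ x ^ 2 / 2 * deriv h x) x := fun x => by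
    refine ((((hσ.differentiable one_ne_zero x).hasDerivAt.fun_pow 2).div_const 2).fun_mul
      (hh.differentiable two_ne_zero x).hasDerivAt).congr_deriv ?_
    simp only [Nat.cast_ofNat, Nat.reduceSub, pow_one]
    ring
  rw [integral_mul_deriv_eq_neg_deriv_mul_of_eq_zero (fun x _ => hu x)
      (fun x _ => (hh'.differentiable one_ne_zero x).hasDerivAt)
      (Continuous.intervalIntegrable (by fun_prop) _ _)
      (Continuous.intervalIntegrable (by fun_prop) _ _) (by simp [ha]) (by simp [hb]),
    ← neg_add', ← integral_add (Continuous.intervalIntegrable (by fun_prop) _ _)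
      (Continuous.intervalIntegrable (by fun_prop) _ _)]
  congr 1
  exact integral_congr fun z _ => by ring

theorem integral_mul_deriv_mul_mul_deriv_eq (hσ : ContDiff ℝ 2 σ) (hh : ContDiff ℝ 1 h)
    (ha : σ a = 0) (hb : σ b = 0) :
    ∫ z in a..b, σ z * deriv σ z * h z * deriv h z
      = -(1 / 2) * ∫ z in a..b, (σ z * deriv (deriv σ) z + deriv σ z ^ 2) * h z ^ 2 := by
  have hσ' : ContDiff ℝ 1 (deriv σ) := hσ.deriv'
  have hσ₁ := hσ'.continuous
  have hσ₂ := hσ'.continuous_deriv_one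
  have hh₁ := hh.continuous_deriv_one
  have hv : ∀ x, HasDerivAt (fun z => h z ^ 2 / 2) (h x * deriv h x) x := fun x => by
    refine (((hh.differentiable one_ne_zero x).hasDerivAt.fun_pow 2).div_const 2).congr_deriv ?_
    simp only [Nat.cast_ofNat, Nat.reduceSub, pow_one]
    ring
  calc ∫ z in a..b, σ z * deriv σ z * h z * deriv h z
      = ∫ z in a..b, (σ z * deriv σ z) * (h z * deriv h z) :=
        integral_congr fun z _ => by ring
    _ = -∫ z in a..b, (deriv σ z * deriv σ z + σ z * deriv (deriv σ) z) * (h z ^ 2 / 2) :=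
        integral_mul_deriv_eq_neg_deriv_mul_of_eq_zero
          (fun x _ => ((hσ.differentiable two_ne_zero x).hasDerivAt.mul
            (hσ'.differentiable one_ne_zero x).hasDerivAt))
          (fun x _ => hv x) (Continuous.intervalIntegrable (by fun_prop) _ _)
          (Continuous.intervalIntegrable (by fun_prop) _ _) (by simp [ha]) (by simp [hb])
    _ = _ := by
        rw [← integral_const_mul, ← integral_neg]
        exact integral_congr fun z _ => by ring

end Diffusion

open intervalIntegral in
/-- The key integration-by-parts estimate for the diffusion terms: with `σ`
vanishing at both endpoints,
`∫ (σ²/2) h h'' + 2∫ σσ' h h' ≤ c ∫ h² - ∫ (σ²/2)(h')²` where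
`c = ½ sup |σσ'' + (σ')²|`; in particular the left-hand side is `≤ c ∫ h²`. -/
theorem statement17 (zmin zmax : ℝ) (hz : zmin ≤ zmax)
    (σ h : ℝ → ℝ) (hσ : ContDiff ℝ 2 σ) (hh : ContDiff ℝ 2 h)
    (hσmin : σ zmin = 0) (hσmax : σ zmax = 0) :
    ((∫ z in zmin..zmax, (σ z ^ 2 / 2) * h z * deriv (deriv h) z)
        + 2 * (∫ z in zmin..zmax, σ z * deriv σ z * h z * deriv h z)
      ≤ (1 / 2) * sSup ((fun z => |σ z * deriv (deriv σ) z + (deriv σ z) ^ 2|) ''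
            Set.Icc zmin zmax) * (∫ z in zmin..zmax, (h z) ^ 2)
        - (∫ z in zmin..zmax, (σ z ^ 2 / 2) * (deriv h z) ^ 2)) ∧
    ((∫ z in zmin..zmax, (σ z ^ 2 / 2) * h z * deriv (deriv h) z)
        + 2 * (∫ z in zmin..zmax, σ z * deriv σ z * h z * deriv h z)
      ≤ (1 / 2) * sSup ((fun z => |σ z * deriv (deriv σ) z + (deriv σ z) ^ 2|) ''
            Set.Icc zmin zmax) * (∫ z in zmin..zmax, (h z) ^ 2)) := by
  have hσ₀ := hσ.continuous
  have hσ₁ := hσ.continuous_deriv one_le_two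
  have hσ₂ := (hσ.deriv' (n := 1)).continuous_deriv_one
  have hdiffusion := integral_sq_div_two_mul_mul_deriv_deriv_eq (hσ.of_le one_le_two) hh hσmin hσmax
  have hcross := integral_mul_deriv_mul_mul_deriv_eq hσ (hh.of_le one_le_two) hσmin hσmax
  have hbound := abs_integral_mul_le_sSup_abs_mul_integral hz
    (f := fun z => σ z * deriv (deriv σ) z + deriv σ z ^ 2) (g := fun z => h z ^ 2)
    (by fun_prop : Continuous _).continuousOn (hh.continuous.pow 2).continuousOn
    fun z _ => sq_nonneg (h z)
  have hdissipation : 0 ≤ ∫ z in zmin..zmax, (σ z ^ 2 / 2) * deriv h z ^ 2 :=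
    integral_nonneg hz fun z _ => by positivity
  have hneg := neg_le_abs (∫ z in zmin..zmax, (σ z * deriv (deriv σ) z + deriv σ z ^ 2) * h z ^ 2)
  constructor <;> linarith
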